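/- arXiv:2003.07113 — 5 statements merged into one kernel-verified Lean document; each statement's English description precedes it below -/
import Mathlib

section
/- Let X be a finite multiset of natural numbers and t a natural number with t ≤ ∑X. Define X* = X + {(∑X) + t, 2·(∑X) − t} (adding two new elements) and t* = (∑X*)/2. Then there exists a sub-multiset of X summing to t if and only if there exists a sub-multiset of X* summing to (∑X*)/2 (i.e., X* is a yes-instance of Partition). -/
lemma le_pair_cases {a b : ℕ} {Z : Multiset ℕ} (h : Z ≤ ({a, b} : Multiset ℕ)) :
    Z = 0 ∨ Z = {a} ∨ Z = {b} ∨ Z = ({a, b} : Multiset ℕ) := by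
  by_cases ha : a ∈ Z
  · obtain ⟨Z', rfl⟩ := Multiset.exists_cons_of_mem ha
    have hZ' : Z' ≤ ({b} : Multiset ℕ) := by
      have := (Multiset.cons_le_cons_iff a).mp h
      simpa using this
    rcases Multiset.le_singleton.mp hZ' with rfl | rfl
    · right; left; rfl
    · right; right; right; rfl
  · have hZ : Z ≤ ({b} : Multiset ℕ) := by
      rw [Multiset.le_iff_count] at h ⊢
      intro x
      by_cases hx : x = a
      · subst hx; simp [Multiset.count_eq_zero_of_notMem ha]
      · have := h x
        simpa [Multiset.count_cons, hx] using this
    rcases Multiset.le_singleton.mp hZ with rfl | rfl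
    · left; rfl
    · right; right; left; rfl

/-- Subset Sum to Partition: `X* = X + {∑X + t, 2∑X − t}` is a yes-instance of
Partition (some sub-multiset sums to half the total) iff `X` has a sub-multiset
summing to `t`. -/
theorem stmt_0 (X : Multiset ℕ) (t : ℕ) (ht : t ≤ X.sum) :
    (∃ Y ≤ X, Y.sum = t) ↔
    (∃ Y ≤ X + ({X.sum + t, 2 * X.sum - t} : Multiset ℕ),
      Y.sum = (X + ({X.sum + t, 2 * X.sum - t} : Multiset ℕ)).sum / 2) := by
  have htot : (X + ({X.sum + t, 2 * X.sum - t} : Multiset ℕ)).sum = 4 * X.sum := by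
    simp [Multiset.insert_eq_cons]
    omega
  constructor
  · rintro ⟨Y, hY, hsum⟩
    refine ⟨Y + {2 * X.sum - t}, ?_, ?_⟩
    · refine add_le_add hY ?_
      simp [Multiset.insert_eq_cons]
    · rw [htot]
      simp [hsum]
      omega
  · rintro ⟨Y, hY, hsum⟩
    rw [htot] at hsum
    set B : Multiset ℕ := {X.sum + t, 2 * X.sum - t} with hB
    have hW : Y - B ≤ X := Multiset.sub_le_iff_le_add.mpr hY
    have hZ : Y ∩ B ≤ B := Multiset.inter_le_right
    have hYeq : (Y - B) + (Y ∩ B) = Y := Multiset.sub_add_inter Y B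
    have hWsum : (Y - B).sum ≤ X.sum := by
      obtain ⟨u, hu⟩ := Multiset.le_iff_exists_add.mp hW
      rw [hu, Multiset.sum_add]; omega
    have hsplit : (Y - B).sum + (Y ∩ B).sum = Y.sum := by
      rw [← Multiset.sum_add, hYeq]
    rcases le_pair_cases hZ with hc | hc | hc | hc
    · rw [hc] at hsplit
      simp at hsplit
      refine ⟨0, Multiset.zero_le X, ?_⟩
      simp; omega
    · rw [hc] at hsplit
      simp at hsplit
      refine ⟨X - (Y - B), Multiset.sub_le_self X (Y - B), ?_⟩
      have h2 : (X - (Y - B)) + (Y - B) = X := tsub_add_cancel_of_le hW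
      have h3 : (X - (Y - B)).sum + (Y - B).sum = X.sum := by
        rw [← Multiset.sum_add, h2]
      omega
    · rw [hc] at hsplit
      simp at hsplit
      exact ⟨Y - B, hW, by omega⟩
    · rw [hc, hB] at hsplit
      simp [Multiset.insert_eq_cons] at hsplit
      refine ⟨0, Multiset.zero_le X, ?_⟩
      simp; omega
end

section
/- In the reduction from N Subset Sum instances to one (OR-composition), completeness holds: suppose instance i has a solution Y_i ⊆ X_i of cardinality exactly n summing to t. Define for each element x_{i,j} the composed number x⁰_{i,j} = x_{i,j} + B·1 + B²·s_i (encoding the value, a counter 1, and the average-free label s_i) and the instance-selector number x⁰_i = B²·n·(S_max − s_i) + B³, with target t₀ = t + B·n + B²·n·S_max + B³, where B is larger than all relevant block sums. Then the set {x⁰_{i,j} : x_{i,j} ∈ Y_i} ∪ {x⁰_i} sums to exactly t₀. -/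
/-- OR-composition completeness: if `Y` is a solution of instance `i` with
cardinality `n` and sum `t`, then the composed numbers for `Y` together with the
selector number for instance `i` sum to the composed target `t₀`. -/
theorem stmt_8 (B n t Smax si : ℕ) (hsi : si ≤ Smax)
    (Y : Multiset ℕ) (hcard : Multiset.card Y = n) (hsum : Y.sum = t) :
    ((Y.map (fun x => x + B + B ^ 2 * si)) +
        ({B ^ 2 * (n * (Smax - si)) + B ^ 3} : Multiset ℕ)).sum =
      t + B * n + B ^ 2 * (n * Smax) + B ^ 3 := by
  have h1 : (Y.map (fun x => x + B + B ^ 2 * si)).sum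
      = t + n * B + n * (B ^ 2 * si) := by
    rw [Multiset.sum_map_add, Multiset.sum_map_add]
    simp [hsum, hcard, Multiset.map_const']
  rw [Multiset.sum_add, h1, Multiset.sum_singleton]
  have h2 : n * si ≤ n * Smax := Nat.mul_le_mul_left n hsi
  have h3 : B ^ 2 * (n * (Smax - si)) + B ^ 2 * (n * si) = B ^ 2 * (n * Smax) := by
    rw [← Nat.mul_add, ← Nat.mul_add, Nat.sub_add_cancel hsi]
  have h4 : n * (B ^ 2 * si) = B ^ 2 * (n * si) := by ring
  have h5 : B * n = n * B := Nat.mul_comm B n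
  omega
end

section
/- Two-machine scheduling with level-order precedence encodes AND Partition: given N multisets X_1,…,X_N of positive naturals with t_i = (∑X_i)/2 ∈ ℕ, there exists an assignment of every element of every X_i to one of two machines such that, for every prefix i and each machine, the assigned elements from X_1 ∪ ⋯ ∪ X_i total exactly t_1 + ⋯ + t_i, if and only if every X_i admits a sub-multiset summing to t_i. Equivalently: each class X_i can be scheduled back-to-back on two machines finishing both at time ∑_{ℓ≤i} t_ℓ iff each X_i is a yes-instance of Partition. -/
/-- Two machines with level-order precedence encode AND Partition: there is an
assignment of the jobs of each class to one of two machines which is exactly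
balanced on every prefix of classes iff every class admits a balanced partition. -/
theorem stmt_11 (N : ℕ) (X : Fin N → Multiset ℕ) (t : Fin N → ℕ)
    (hpos : ∀ i, ∀ x ∈ X i, 0 < x)
    (hsum : ∀ i, (X i).sum = 2 * t i) :
    (∃ Y : Fin N → Multiset ℕ, (∀ i, Y i ≤ X i) ∧
      ∀ i : Fin N, (∑ ℓ ∈ Finset.Iic i, (Y ℓ).sum) = ∑ ℓ ∈ Finset.Iic i, t ℓ) ↔
    (∀ i : Fin N, ∃ Y ≤ X i, Y.sum = t i) := by
  constructor
  · rintro ⟨Y, hY, h⟩ i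
    refine ⟨Y i, hY i, ?_⟩
    have key : (∑ ℓ ∈ Finset.Iio i, (Y ℓ).sum) = ∑ ℓ ∈ Finset.Iio i, t ℓ := by
      rcases Nat.eq_zero_or_pos i.val with h0 | h0
      · have : Finset.Iio i = ∅ := by
          ext x
          simp [Fin.lt_def, h0]
        simp [this]
      · have hj : i.val - 1 < N := by omega
        have hIio : Finset.Iio i = Finset.Iic ⟨i.val - 1, hj⟩ := by
          ext x
          simp only [Finset.mem_Iio, Finset.mem_Iic, Fin.lt_def, Fin.le_def]
          omega
        rw [hIio]
        exact h _
    have h1 := h i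
    rw [← Finset.Iio_insert, Finset.sum_insert (by simp),
        Finset.sum_insert (by simp), key] at h1
    omega
  · intro h
    refine ⟨fun i => (h i).choose, fun i => (h i).choose_spec.1, fun i => ?_⟩
    exact Finset.sum_congr rfl fun ℓ _ => (h ℓ).choose_spec.2
end

section
/- Weighted early-set counting lemma (soundness core of the 1||Σw_jU_j reduction): let t_1,…,t_N be positive naturals and for each i let E_i be a sub-multiset of X_i (jobs with due date d_i = ∑_{ℓ≤i} t_ℓ and weight (N−i+1) per unit of processing time) such that all jobs in all E_i fit early in a single-machine schedule, i.e., for every i, ∑_{ℓ≤i} p(E_ℓ) ≤ d_i. If additionally ∑_i (N−i+1)·p(E_i) ≥ ∑_i (N−i+1)·t_i, then p(E_i) = t_i for every i. -/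
lemma abel_key (N : ℕ) (x : Fin N → ℕ) :
    ∑ i : Fin N, ∑ ℓ ∈ Finset.Iic i, x ℓ = ∑ ℓ : Fin N, (N - (ℓ : ℕ)) * x ℓ := by
  rw [Finset.sum_comm' (s' := fun ℓ => Finset.Ici ℓ) (t' := Finset.univ)
    (by intro i ℓ; simp [Finset.mem_Iic, Finset.mem_Ici])]
  simp [Fin.card_Ici, mul_comm]

/-- Weighted early-set counting lemma: if the early sets fit (prefix-sum
domination) and their total weight, with weight `N − i + 1` per unit of
processing for the `i`-th class (`i = 1, …, N`), is at least `∑ (N−i+1)·tᵢ`, then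
each early set has processing time exactly `tᵢ`. -/
theorem stmt_13 (N : ℕ) (t p : Fin N → ℕ)
    (ht : ∀ i, 0 < t i)
    (hfit : ∀ i : Fin N, (∑ ℓ ∈ Finset.Iic i, p ℓ) ≤ ∑ ℓ ∈ Finset.Iic i, t ℓ)
    (hw : (∑ i : Fin N, (N - (i : ℕ)) * t i) ≤ ∑ i : Fin N, (N - (i : ℕ)) * p i) :
    ∀ i, p i = t i := by
  have hsum : ∑ i : Fin N, ∑ ℓ ∈ Finset.Iic i, p ℓ = ∑ i : Fin N, ∑ ℓ ∈ Finset.Iic i, t ℓ := by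
    apply le_antisymm (Finset.sum_le_sum fun i _ => hfit i)
    rw [abel_key, abel_key]; exact hw
  have heq : ∀ i : Fin N, (∑ ℓ ∈ Finset.Iic i, p ℓ) = ∑ ℓ ∈ Finset.Iic i, t ℓ :=
    fun i => (Finset.sum_eq_sum_iff_of_le (fun i _ => hfit i)).1 hsum i (Finset.mem_univ i)
  intro i
  have hsplit : ∀ x : Fin N → ℕ,
      ∑ ℓ ∈ Finset.Iic i, x ℓ = (∑ ℓ ∈ Finset.Iio i, x ℓ) + x i := by
    intro x
    rw [← Finset.sum_Iio_add_eq_sum_Iic]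
  have hio : (∑ ℓ ∈ Finset.Iio i, p ℓ) = ∑ ℓ ∈ Finset.Iio i, t ℓ := by
    rcases Nat.eq_zero_or_pos i.val with h0 | hpos
    · have : Finset.Iio i = ∅ := by
        ext ℓ; simp [Finset.mem_Iio, Fin.lt_def, h0, Nat.not_lt_zero]
      simp [this]
    · obtain ⟨k, hk⟩ : ∃ k, i.val = k + 1 := ⟨i.val - 1, by omega⟩
      have hkN : k < N := by omega
      have : Finset.Iio i = Finset.Iic (⟨k, hkN⟩ : Fin N) := by
        ext ℓ; simp [Finset.mem_Iio, Finset.mem_Iic, Fin.lt_def, Fin.le_def, hk]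
      rw [this]; exact heq _
  have := heq i
  rw [hsplit p, hsplit t, hio] at this
  omega
end

section
/- Release-date scheduling encodes AND Partition: given N Partition instances X_1,…,X_N with targets t_i = (∑X_i)/2, create for each x ∈ X_i a job with processing time x and release date r_i = ∑_{ℓ<i} t_ℓ. Then there is a feasible non-preemptive schedule on two machines, with each job starting at or after its release date, and makespan at most ∑_{i=1}^N t_i, if and only if every X_i has a sub-multiset summing to t_i. -/
section
variable (N : ℕ) (t : Fin N → ℕ)

/-- Release date as a function of a natural number cutoff. -/
def Rfun (n : ℕ) : ℕ := ∑ ℓ ∈ Finset.univ.filter (fun ℓ : Fin N => ℓ.val < n), t ℓ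

lemma Rfun_mono : Monotone (Rfun N t) := by
  intro a b hab
  apply Finset.sum_le_sum_of_subset
  intro ℓ hℓ
  simp only [Finset.mem_filter, Finset.mem_univ, true_and] at *
  omega

lemma Rfun_succ (i : Fin N) : Rfun N t (i.val + 1) = Rfun N t i.val + t i := by
  unfold Rfun
  have hset : Finset.univ.filter (fun ℓ : Fin N => ℓ.val < i.val + 1)
      = insert i (Finset.univ.filter (fun ℓ : Fin N => ℓ.val < i.val)) := by
    ext ℓ
    simp only [Finset.mem_insert, Finset.mem_filter, Finset.mem_univ, true_and]
    constructor
    · intro h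
      rcases Nat.lt_succ_iff_lt_or_eq.mp h with h | h
      · exact Or.inr h
      · exact Or.inl (Fin.ext h)
    · rintro (rfl | h) <;> omega
  rw [hset, Finset.sum_insert (by simp), add_comm]

lemma Rfun_top : Rfun N t N = ∑ ℓ, t ℓ := by
  unfold Rfun
  apply Finset.sum_congr _ (fun _ _ => rfl)
  ext ℓ
  simp [ℓ.isLt]

lemma Rfun_Iio (i : Fin N) : ∑ ℓ ∈ Finset.Iio i, t ℓ = Rfun N t i.val := by
  unfold Rfun
  apply Finset.sum_congr _ (fun _ _ => rfl)
  ext ℓ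
  simp only [Finset.mem_Iio, Finset.mem_filter, Finset.mem_univ, true_and, Fin.lt_iff_val_lt_val]

end

/-- Disjoint intervals with positive lengths, all in `[a, T]`. -/
lemma intervals_pos {ι : Type*} [DecidableEq ι] (Sf xf : ι → ℕ) (a : ℕ) (s : Finset ι) :
    ∀ T, a ≤ T → (∀ j ∈ s, 0 < xf j) → (∀ j ∈ s, a ≤ Sf j) → (∀ j ∈ s, Sf j + xf j ≤ T) →
    (∀ j ∈ s, ∀ j' ∈ s, j ≠ j' → Sf j + xf j ≤ Sf j' ∨ Sf j' + xf j' ≤ Sf j) →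
    a + ∑ j ∈ s, xf j ≤ T := by
  induction s using Finset.strongInductionOn with
  | _ s ih =>
    intro T haT hpos hlo hhi hdisj
    rcases s.eq_empty_or_nonempty with rfl | hne
    · simpa using haT
    · obtain ⟨p, hp, hpmax⟩ := s.exists_max_image (fun j => Sf j + xf j) hne
      have hsub : s.erase p ⊂ s := Finset.erase_ssubset hp
      have hkey : ∀ j ∈ s.erase p, Sf j + xf j ≤ Sf p := by
        intro j hj
        have hjs := Finset.mem_of_mem_erase hj
        have hne' : j ≠ p := Finset.ne_of_mem_erase hj
        rcases hdisj j hjs p hp hne' with h | h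
        · exact h
        · have := hpmax j hjs
          have := hpos j hjs
          omega
      have hrec := ih (s.erase p) hsub (Sf p) (hlo p hp)
        (fun j hj => hpos j (Finset.mem_of_mem_erase hj))
        (fun j hj => hlo j (Finset.mem_of_mem_erase hj))
        hkey
        (fun j hj j' hj' hne' => hdisj j (Finset.mem_of_mem_erase hj) j'
          (Finset.mem_of_mem_erase hj') hne')
      have hsplit : ∑ j ∈ s, xf j = xf p + ∑ j ∈ s.erase p, xf j :=
        (Finset.add_sum_erase s xf hp).symm
      have := hhi p hp
      omega

lemma intervals_le {ι : Type*} [DecidableEq ι] (Sf xf : ι → ℕ) (a T : ℕ) (s : Finset ι)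
    (haT : a ≤ T) (hlo : ∀ j ∈ s, a ≤ Sf j) (hhi : ∀ j ∈ s, Sf j + xf j ≤ T)
    (hdisj : ∀ j ∈ s, ∀ j' ∈ s, j ≠ j' → Sf j + xf j ≤ Sf j' ∨ Sf j' + xf j' ≤ Sf j) :
    a + ∑ j ∈ s, xf j ≤ T := by
  classical
  have hsum : ∑ j ∈ s, xf j = ∑ j ∈ s.filter (fun j => 0 < xf j), xf j := by
    rw [Finset.sum_filter_of_ne]
    intro j _ h
    omega
  rw [hsum]
  exact intervals_pos Sf xf a _ T haT
    (fun j hj => (Finset.mem_filter.mp hj).2)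
    (fun j hj => hlo j (Finset.mem_filter.mp hj).1)
    (fun j hj => hhi j (Finset.mem_filter.mp hj).1)
    (fun j hj j' hj' h => hdisj j (Finset.mem_filter.mp hj).1 j' (Finset.mem_filter.mp hj').1 h)

lemma exists_of_le_map {α β : Type*} [DecidableEq α] [DecidableEq β] (f : α → β)
    (s : Multiset α) : ∀ Y : Multiset β, Y ≤ s.map f → ∃ Z ≤ s, Z.map f = Y := by
  induction s using Multiset.induction_on with
  | empty => intro Y hY; simp at hY; exact ⟨0, le_refl _, by simp [hY]⟩
  | cons a s ih =>
    intro Y hY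
    rw [Multiset.map_cons] at hY
    by_cases hfa : f a ∈ Y
    · have h1 : f a ::ₘ Y.erase (f a) = Y := Multiset.cons_erase hfa
      have h2 : Y.erase (f a) ≤ s.map f := by
        have := hY
        rw [← h1] at this
        exact (Multiset.cons_le_cons_iff _).mp this
      obtain ⟨Z, hZ, hZm⟩ := ih _ h2
      exact ⟨a ::ₘ Z, Multiset.cons_le_cons _ hZ, by rw [Multiset.map_cons, hZm, h1]⟩
    · have h2 : Y ≤ s.map f := (Multiset.le_cons_of_notMem hfa).mp hY
      obtain ⟨Z, hZ, hZm⟩ := ih _ h2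
      exact ⟨Z, le_trans hZ (Multiset.le_cons_self _ _), hZm⟩

/-- Release-date scheduling on two machines encodes AND Partition: the jobs of
class `i` (processing times `x i j`, release date `rᵢ = ∑_{ℓ<i} tℓ`) admit a
feasible non-preemptive two-machine schedule with makespan at most `∑ tᵢ` iff
every class has a sub-multiset summing to `tᵢ`. -/
theorem stmt_15 (N : ℕ) (k : Fin N → ℕ) (x : ∀ i, Fin (k i) → ℕ) (t : Fin N → ℕ)
    (hsum : ∀ i, (∑ j, x i j) = 2 * t i) :
    (∃ (m : ∀ i, Fin (k i) → Bool) (S : ∀ i, Fin (k i) → ℕ),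
      (∀ i j, (∑ ℓ ∈ Finset.Iio i, t ℓ) ≤ S i j) ∧
      (∀ (i i' : Fin N) (j : Fin (k i)) (j' : Fin (k i')),
        (⟨i, j⟩ : Σ i, Fin (k i)) ≠ ⟨i', j'⟩ → m i j = m i' j' →
        S i j + x i j ≤ S i' j' ∨ S i' j' + x i' j' ≤ S i j) ∧
      (∀ i j, S i j + x i j ≤ ∑ ℓ, t ℓ)) ↔
    (∀ i : Fin N, ∃ Y ≤ Multiset.map (x i) Finset.univ.val, Y.sum = t i) := by
  classical
  constructor
  · rintro ⟨m, S, hrel, hdisj, hmk⟩ i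
    set T := ∑ ℓ, t ℓ with hT
    let Sf : (Σ i, Fin (k i)) → ℕ := fun p => S p.1 p.2
    let xf : (Σ i, Fin (k i)) → ℕ := fun p => x p.1 p.2
    let sb : Bool → ℕ → Finset (Σ i, Fin (k i)) := fun b n =>
      Finset.univ.filter (fun p => m p.1 p.2 = b ∧ n ≤ p.1.val)
    let A : Bool → ℕ → ℕ := fun b n => ∑ p ∈ sb b n, xf p
    have h1 : ∀ b n, n ≤ N → Rfun N t n + A b n ≤ T := by
      intro b n hn
      apply intervals_le
      · rw [hT, ← Rfun_top N t]; exact Rfun_mono N t hn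
      · intro p hp
        simp only [sb, Finset.mem_filter] at hp
        calc Rfun N t n ≤ Rfun N t p.1.val := Rfun_mono N t hp.2.2
        _ ≤ Sf p := by rw [← Rfun_Iio N t p.1]; exact hrel p.1 p.2
      · intro p _; exact hmk p.1 p.2
      · intro p hp p' hp' hne
        simp only [sb, Finset.mem_filter] at hp hp'
        apply hdisj p.1 p'.1 p.2 p'.2
        · simpa using hne
        · rw [hp.2.1, hp'.2.1]
    have hRc : ∀ n, Rfun N t n
        + ∑ i' ∈ Finset.univ.filter (fun i' : Fin N => n ≤ i'.val), t i' = T := by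
      intro n
      rw [hT]
      have := Finset.sum_filter_add_sum_filter_not Finset.univ
        (fun i' : Fin N => i'.val < n) t
      rw [show Finset.univ.filter (fun i' : Fin N => ¬ i'.val < n)
        = Finset.univ.filter (fun i' : Fin N => n ≤ i'.val) by
          apply Finset.filter_congr; intro i' _; simp] at this
      exact this
    have h2 : ∀ n, A false n + A true n
        = 2 * ∑ i' ∈ Finset.univ.filter (fun i' : Fin N => n ≤ i'.val), t i' := by
      intro n
      have hft : sb true n = (Finset.univ.filter (fun p : Σ i, Fin (k i) => n ≤ p.1.val)).filter
          (fun p => m p.1 p.2 = true) := by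
        ext p; simp only [sb, Finset.mem_filter, Finset.mem_univ, true_and]; tauto
      have hff : sb false n = (Finset.univ.filter (fun p : Σ i, Fin (k i) => n ≤ p.1.val)).filter
          (fun p => ¬ m p.1 p.2 = true) := by
        ext p
        simp only [sb, Finset.mem_filter, Finset.mem_univ, true_and, Bool.not_eq_true]
        tauto
      have hadd := Finset.sum_filter_add_sum_filter_not
        (Finset.univ.filter (fun p : Σ i, Fin (k i) => n ≤ p.1.val))
        (fun p => m p.1 p.2 = true) xf
      have hsig : Finset.univ.filter (fun p : Σ i, Fin (k i) => n ≤ p.1.val)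
          = (Finset.univ.filter (fun i' : Fin N => n ≤ i'.val)).sigma (fun _ => Finset.univ) := by
        ext p; simp [Finset.mem_sigma]
      have hsum2 : ∑ p ∈ Finset.univ.filter (fun p : Σ i, Fin (k i) => n ≤ p.1.val), xf p
          = 2 * ∑ i' ∈ Finset.univ.filter (fun i' : Fin N => n ≤ i'.val), t i' := by
        rw [hsig, Finset.sum_sigma, Finset.mul_sum]
        exact Finset.sum_congr rfl (fun i' _ => hsum i')
      show A false n + A true n = _
      simp only [A, hft, hff]
      rw [add_comm, hadd, hsum2]
    have h3 : ∀ b n, n ≤ N → Rfun N t n + A b n = T := by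
      intro b n hn
      have ha := h1 false n hn
      have hb := h1 true n hn
      have hc := h2 n
      have hd := hRc n
      cases b <;> omega
    have hsplitA : ∀ b : Bool, A b i.val
        = A b (i.val + 1) + ∑ j ∈ Finset.univ.filter (fun j => m i j = b), x i j := by
      intro b
      have hadd := Finset.sum_filter_add_sum_filter_not (sb b i.val)
        (fun p => i.val + 1 ≤ p.1.val) xf
      have he1 : (sb b i.val).filter (fun p => i.val + 1 ≤ p.1.val) = sb b (i.val + 1) := by
        ext p
        simp only [sb, Finset.mem_filter, Finset.mem_univ, true_and]
        constructor
        · rintro ⟨⟨h1, h2⟩, h3⟩; exact ⟨h1, h3⟩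
        · rintro ⟨h1, h3⟩; exact ⟨⟨h1, by omega⟩, h3⟩
      have he2 : (sb b i.val).filter (fun p => ¬ i.val + 1 ≤ p.1.val)
          = ({i} : Finset (Fin N)).sigma (fun i' => Finset.univ.filter (fun j => m i' j = b)) := by
        ext p
        simp only [sb, Finset.mem_filter, Finset.mem_univ, true_and, Finset.mem_sigma,
          Finset.mem_singleton]
        constructor
        · rintro ⟨⟨h1, h2⟩, h3⟩
          exact ⟨Fin.ext (by omega), h1⟩
        · rintro ⟨h1, h2⟩
          refine ⟨⟨h2, ?_⟩, ?_⟩ <;> rw [h1] <;> omega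
      have he3 : ∑ p ∈ ({i} : Finset (Fin N)).sigma
          (fun i' => Finset.univ.filter (fun j => m i' j = b)), xf p
          = ∑ j ∈ Finset.univ.filter (fun j => m i j = b), x i j := by
        rw [Finset.sum_sigma, Finset.sum_singleton]
      show A b i.val = _
      simp only [A]
      rw [← hadd, he1, he2, he3]
    have htC : ∑ j ∈ Finset.univ.filter (fun j => m i j = false), x i j = t i := by
      have ha := h3 false i.val (le_of_lt i.isLt)
      have hb := h3 false (i.val + 1) i.isLt
      have hc := Rfun_succ N t i
      have hd := hsplitA false
      omega
    refine ⟨Multiset.map (x i) (Finset.univ.filter (fun j => m i j = false)).val, ?_, ?_⟩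
    · apply Multiset.map_le_map
      rw [Finset.filter_val]
      exact Multiset.filter_le _ _
    · exact htC
  · intro h
    have hZ : ∀ i, ∃ Z : Finset (Fin (k i)), ∑ j ∈ Z, x i j = t i := by
      intro i
      obtain ⟨Y, hYle, hYsum⟩ := h i
      obtain ⟨Zm, hZm, hZmap⟩ := exists_of_le_map (x i) Finset.univ.val Y hYle
      have hnd : Zm.Nodup := Multiset.nodup_of_le hZm Finset.univ.nodup
      refine ⟨⟨Zm, hnd⟩, ?_⟩
      show (Multiset.map (x i) Zm).sum = t i
      rw [hZmap, hYsum]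
    choose Z hZsum using hZ
    let m : ∀ i, Fin (k i) → Bool := fun i j => decide (j ∈ Z i)
    have hC : ∀ i (b : Bool), ∑ j ∈ Finset.univ.filter (fun j => m i j = b), x i j = t i := by
      intro i b
      have hTT : ∑ j ∈ Finset.univ.filter (fun j => m i j = true), x i j = t i := by
        rw [show Finset.univ.filter (fun j => m i j = true) = Z i by
          ext j; simp [m]]
        exact hZsum i
      have hadd := Finset.sum_filter_add_sum_filter_not Finset.univ
        (fun j => m i j = true) (x i)
      rw [show Finset.univ.filter (fun j => ¬ m i j = true)
          = Finset.univ.filter (fun j => m i j = false) by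
        apply Finset.filter_congr; intro j _; simp] at hadd
      have htot := hsum i
      cases b
      · omega
      · exact hTT
    let S : ∀ i, Fin (k i) → ℕ := fun i j => Rfun N t i.val
      + ∑ j' ∈ Finset.univ.filter (fun j' => m i j' = m i j ∧ j' < j), x i j'
    have hend : ∀ i j, S i j + x i j ≤ Rfun N t i.val + t i := by
      intro i j
      have hsubset : insert j (Finset.univ.filter (fun j' => m i j' = m i j ∧ j' < j))
          ⊆ Finset.univ.filter (fun j' => m i j' = m i j) := by
        intro j' hj'
        rcases Finset.mem_insert.mp hj' with rfl | hj'
        · simp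
        · simp only [Finset.mem_filter, Finset.mem_univ, true_and] at *
          exact hj'.1
      have hle := Finset.sum_le_sum_of_subset (f := x i) hsubset
      rw [Finset.sum_insert (by simp)] at hle
      have := hC i (m i j)
      simp only [S]
      omega
    have hmono : ∀ i (j j' : Fin (k i)), m i j = m i j' → j < j' → S i j + x i j ≤ S i j' := by
      intro i j j' hm hlt
      have hsubset : insert j (Finset.univ.filter (fun j'' => m i j'' = m i j ∧ j'' < j))
          ⊆ Finset.univ.filter (fun j'' => m i j'' = m i j' ∧ j'' < j') := by
        intro j'' hj''
        rcases Finset.mem_insert.mp hj'' with rfl | hj''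
        · simp only [Finset.mem_filter, Finset.mem_univ, true_and]
          exact ⟨hm, hlt⟩
        · simp only [Finset.mem_filter, Finset.mem_univ, true_and] at *
          exact ⟨hj''.1.trans hm, hj''.2.trans hlt⟩
      have hle := Finset.sum_le_sum_of_subset (f := x i) hsubset
      rw [Finset.sum_insert (by simp)] at hle
      simp only [S]
      omega
    refine ⟨m, S, ?_, ?_, ?_⟩
    · intro i j
      rw [Rfun_Iio N t i]
      exact Nat.le_add_right _ _
    · intro i i' j j' hne hm
      rcases lt_trichotomy i i' with hlt | rfl | hlt
      · left
        calc S i j + x i j ≤ Rfun N t i.val + t i := hend i j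
          _ = Rfun N t (i.val + 1) := (Rfun_succ N t i).symm
          _ ≤ Rfun N t i'.val := Rfun_mono N t hlt
          _ ≤ S i' j' := Nat.le_add_right _ _
      · have hjj : j ≠ j' := fun hjj => hne (by rw [hjj])
        rcases lt_or_gt_of_ne hjj with hlt | hlt
        · exact Or.inl (hmono i j j' hm hlt)
        · exact Or.inr (hmono i j' j hm.symm hlt)
      · right
        calc S i' j' + x i' j' ≤ Rfun N t i'.val + t i' := hend i' j'
          _ = Rfun N t (i'.val + 1) := (Rfun_succ N t i').symm
          _ ≤ Rfun N t i.val := Rfun_mono N t hlt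
          _ ≤ S i j := Nat.le_add_right _ _
    · intro i j
      calc S i j + x i j ≤ Rfun N t i.val + t i := hend i j
        _ = Rfun N t (i.val + 1) := (Rfun_succ N t i).symm
        _ ≤ Rfun N t N := Rfun_mono N t i.isLt
        _ = ∑ ℓ, t ℓ := Rfun_top N t
end
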